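/- arXiv:1907.07413 — 6 statements merged into one kernel-verified Lean document; each statement's English description precedes it below -/
import Mathlib

section
/- Let x ≥ 0, a ≥ 0, t ∈ ℝ, and let φ ∈ ℝ satisfy a·φ ≥ 0 and t − a − 2√(aφ) ≥ 0. Set d₋ := t − a − 2√(aφ), d₊ := t − a + 2√(aφ), D := −4aφ + (t−a)², and d₀ := φ + x + (t−a)/2 + √(d₋d₊)/2. If d₀ ≥ 0, then 2(t − a + √D)·x − φ² = (x − f_L)(f_R − x), where f_L := ((√d₋ + √d₊)/2 − √d₀)² and f_R := ((√d₋ + √d₊)/2 + √d₀)². -/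
/-!
Write `s := (√d₋ + √d₊)/2` and `v := √d₀`. Since `d₋ + d₊ = 2(t - a)` and `d₋d₊ = D`, one has
`4s² = 2(t - a + √D)` and `v² = φ + x + s²`. The right-hand side is then a difference of squares,
`(2sv - u)(2sv + u)` with `u := s² + v² - x = 2s² + φ`, which equals `4s²v² - u² = 4s²x - φ²`.
-/

open Real

theorem sub_sq_mul_add_sq_sub_of_sq_eq {s v x φ : ℝ} (hv : v ^ 2 = φ + x + s ^ 2) :
    (x - (s - v) ^ 2) * ((s + v) ^ 2 - x) = 4 * s ^ 2 * x - φ ^ 2 := by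
  linear_combination (x + s ^ 2 - φ - v ^ 2) * hv

theorem Real.sqrt_add_sqrt_sq {a b : ℝ} (ha : 0 ≤ a) (hb : 0 ≤ b) :
    (√a + √b) ^ 2 = a + b + 2 * √(a * b) := by
  rw [add_sq, sq_sqrt ha, sq_sqrt hb, sqrt_mul ha]
  ring

theorem stmt_3_general (x a t φ : ℝ)
    (haφ : 0 ≤ a * φ) (hd : 0 ≤ t - a - 2 * Real.sqrt (a * φ))
    (dm dp D d0 : ℝ)
    (hdm : dm = t - a - 2 * Real.sqrt (a * φ))
    (hdp : dp = t - a + 2 * Real.sqrt (a * φ))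
    (hD : D = -4*a*φ + (t - a)^2)
    (hd0 : d0 = φ + x + (t - a)/2 + Real.sqrt (dm * dp)/2)
    (hd0pos : 0 ≤ d0)
    (fL fR : ℝ)
    (hfL : fL = ((Real.sqrt dm + Real.sqrt dp)/2 - Real.sqrt d0)^2)
    (hfR : fR = ((Real.sqrt dm + Real.sqrt dp)/2 + Real.sqrt d0)^2) :
    2*(t - a + Real.sqrt D)*x - φ^2 = (x - fL)*(fR - x) := by
  have hdm0 : 0 ≤ dm := hdm ▸ hd
  have hdp0 : 0 ≤ dp := by rw [hdp]; linarith [sqrt_nonneg (a * φ)]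
  have hD_eq : D = dm * dp := by
    rw [hD, hdm, hdp]
    linear_combination 4 * sq_sqrt haφ
  have hs : 4 * ((√dm + √dp) / 2) ^ 2 = 2 * (t - a + √(dm * dp)) := by
    rw [div_pow, sqrt_add_sqrt_sq hdm0 hdp0, hdm, hdp]
    ring
  have hv : √d0 ^ 2 = φ + x + ((√dm + √dp) / 2) ^ 2 := by
    rw [sq_sqrt hd0pos, hd0]
    linear_combination -hs / 4
  rw [hfL, hfR, sub_sq_mul_add_sq_sub_of_sq_eq hv, hs, hD_eq]

theorem stmt_3 (x a t φ : ℝ) (hx : 0 ≤ x) (ha : 0 ≤ a)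
    (haφ : 0 ≤ a * φ) (hd : 0 ≤ t - a - 2 * Real.sqrt (a * φ))
    (dm dp D d0 : ℝ)
    (hdm : dm = t - a - 2 * Real.sqrt (a * φ))
    (hdp : dp = t - a + 2 * Real.sqrt (a * φ))
    (hD : D = -4*a*φ + (t - a)^2)
    (hd0 : d0 = φ + x + (t - a)/2 + Real.sqrt (dm * dp)/2)
    (hd0pos : 0 ≤ d0)
    (fL fR : ℝ)
    (hfL : fL = ((Real.sqrt dm + Real.sqrt dp)/2 - Real.sqrt d0)^2)
    (hfR : fR = ((Real.sqrt dm + Real.sqrt dp)/2 + Real.sqrt d0)^2) :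
    2*(t - a + Real.sqrt D)*x - φ^2 = (x - fL)*(fR - x) :=
  stmt_3_general x a t φ haφ hd dm dp D d0 hdm hdp hD hd0 hd0pos fL fR hfL hfR
end

section
/- Let r ∈ (0,1], t > 0, and let x ∈ ℝ satisfy S(x;r,t,0) ≤ 0, equivalently x² − 2(r+1)tx + (r−1)²t² ≤ 0. Then g(x;r,t,0) = (1/4)·(x − (r−1)t + √(−3S(x;r,t,0))/t)³. -/
open Filter Topology

/-- The real cube root. -/
noncomputable def cbrt (y : ℝ) : ℝ :=
  if 0 ≤ y then y ^ ((1 : ℝ)/3) else -((-y) ^ ((1 : ℝ)/3))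

/-- The cubic polynomial `S(x; r, t, a)`. -/
noncomputable def S (x r t a : ℝ) : ℝ :=
  4*a*x^3 - (8*a^2 + 4*a*(3*r+2)*t - t^2)*x^2
    + 2*(2*a^3 - 2*a^2*(5*r-2)*t + a*(r*(6*r-1)+1)*t^2 - (r+1)*t^3)*x
    + (r-1)^2*t^2*(a^2 - a*(4*r-2)*t + t^2)

/-- The function `g(x; r, t, a)`. -/
noncomputable def g (x r t a : ℝ) : ℝ :=
  -2*x^3 + 3*((2*r+1)*t + 6*a)*x^2
    - 3*((r-1)*((2*r+1)*t - 3*a)*t - Real.sqrt (-3 * S x r t a))*x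
    + 2*(r-1)^3*t^3

/-- The function `φ(x; r, t, a)`. -/
noncomputable def phi (x r t a : ℝ) : ℝ :=
  -(2/3)*(x - (r-1)*t)
    - (cbrt 2 / 3) * ((x^2 + (3*a - (2*r+1)*t)*x + (r-1)^2*t^2) / cbrt (g x r t a))
    - cbrt (g x r t a) / (3 * cbrt 2)

/-- The function `D(x; r, t, a) = -4aφ + (t-a)²`. -/
noncomputable def Df (x r t a : ℝ) : ℝ := -4*a*phi x r t a + (t-a)^2

/-- The three-parametric Marcenko–Pastur density `ρ(x; r, t, a)`. -/
noncomputable def rho (x r t a : ℝ) : ℝ :=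
  Real.sqrt (2*(t - a + Real.sqrt (Df x r t a))*x - (phi x r t a)^2)
    / (2*Real.pi*r*t*x)

/-- The real part `R(x; r, t, a)` of the boundary value of the Green's function. -/
noncomputable def Rf (x r t a : ℝ) : ℝ :=
  (2*x + (r-1)*t)/(3*r*t*x)
    - (x^2 + (3*a - (2*r+1)*t)*x + (r-1)^2*t^2) / (3 * (cbrt 2)^2 * r * t * cbrt (g x r t a) * x)
    - cbrt (g x r t a) / (6 * cbrt 2 * r * t * x)

/- For `s = √(-3 S(x;r,t,0))`, expanding the cube and reducing `s²` and `s³ = s · s²` by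
`s² = -3 S(x;r,t,0) = -3 t² (x² - 2(r+1) t x + (r-1)² t²)` leaves exactly `4 t³ g(x;r,t,0)`. -/
theorem four_mul_pow_three_mul_g_zero {x r t : ℝ} (hS : S x r t 0 ≤ 0) :
    4 * t ^ 3 * g x r t 0 = (t * (x - (r - 1) * t) + Real.sqrt (-3 * S x r t 0)) ^ 3 := by
  unfold g
  generalize hs_def : Real.sqrt (-3 * S x r t 0) = s
  have hs : s ^ 2 = -3 * S x r t 0 := hs_def ▸ Real.sq_sqrt (by linarith)
  unfold S at hs
  linear_combination (-(3 * t * (x - (r - 1) * t) + s)) * hs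

theorem stmt_4_general (r t x : ℝ) (ht : 0 < t)
    (hS : S x r t 0 ≤ 0) :
    g x r t 0 = (1/4) * (x - (r-1)*t + Real.sqrt (-3 * S x r t 0) / t)^3 := by
  have hsplit : x - (r - 1) * t + Real.sqrt (-3 * S x r t 0) / t
      = (t * (x - (r - 1) * t) + Real.sqrt (-3 * S x r t 0)) / t := by
    field_simp
  rw [hsplit, div_pow, ← four_mul_pow_three_mul_g_zero hS]
  field_simp

theorem stmt_4 (r t x : ℝ) (hr : 0 < r) (hr1 : r ≤ 1) (ht : 0 < t)
    (hS : S x r t 0 ≤ 0) :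
    g x r t 0 = (1/4) * (x - (r-1)*t + Real.sqrt (-3 * S x r t 0) / t)^3 :=
  stmt_4_general r t x ht hS
end

section
/- Let r ∈ (0,1], t > 0, and fix x with (1−√r)²t < x < (1+√r)²t. Then φ(x;r,t,0) = −x + (r−1)t. Consequently, in the definitions of Theorem 1.1 with a = 0 one has d₋ = d₊ = t and d₀ = rt, so that f_L(x;r,t,0) = (1−√r)²t and f_R(x;r,t,0) = (1+√r)²t. -/
/-!
At `a = 0` the discriminant factors as `-3 S = 3 t² (x - (1-√r)² t) ((1+√r)² t - x)`, which is
positive for `x` strictly between the two edges. Writing `A = x - (r-1) t` and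
`u = √(-3 S) / t`, Cardano's radicand `g` is the perfect cube `2 w³` with `w = (A + u) / 2 > 0`,
and the quadratic numerator of `φ` is `(A - w) w`. The two cube-root terms of `φ` therefore sum
to `-A / 3`, so `φ = -A`; with `a = 0` the values of `d₋, d₊, d₀, f_L, f_R` follow by
substitution.
-/

open Filter Topology

/-- `d₋(x; r, t, a)`. -/
noncomputable def dminus (x r t a : ℝ) : ℝ := t - a - 2 * Real.sqrt (a * phi x r t a)

/-- `d₊(x; r, t, a)`. -/
noncomputable def dplus (x r t a : ℝ) : ℝ := t - a + 2 * Real.sqrt (a * phi x r t a)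

/-- `d₀(x; r, t, a)`. -/
noncomputable def dzero (x r t a : ℝ) : ℝ :=
  phi x r t a + x + (t - a)/2 + Real.sqrt (dminus x r t a * dplus x r t a)/2

/-- `f_L(x; r, t, a)`. -/
noncomputable def fL (x r t a : ℝ) : ℝ :=
  ((Real.sqrt (dminus x r t a) + Real.sqrt (dplus x r t a))/2 - Real.sqrt (dzero x r t a))^2

/-- `f_R(x; r, t, a)`. -/
noncomputable def fR (x r t a : ℝ) : ℝ :=
  ((Real.sqrt (dminus x r t a) + Real.sqrt (dplus x r t a))/2 + Real.sqrt (dzero x r t a))^2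

lemma cbrt_of_nonneg {y : ℝ} (hy : 0 ≤ y) : cbrt y = y ^ ((1 : ℝ) / 3) := if_pos hy

lemma cbrt_neg (y : ℝ) : cbrt (-y) = -cbrt y := by
  rcases lt_trichotomy y 0 with hy | rfl | hy
  · simp [cbrt, hy.le, hy.not_ge]
  · simp [cbrt]
  · simp [cbrt, hy.le, hy.not_ge]

lemma cbrt_pos {y : ℝ} (hy : 0 < y) : 0 < cbrt y := by
  rw [cbrt_of_nonneg hy.le]; positivity

lemma cbrt_mul_pow_three_of_nonneg {y w : ℝ} (hy : 0 ≤ y) (hw : 0 ≤ w) :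
    cbrt (y * w ^ 3) = cbrt y * w := by
  rw [cbrt_of_nonneg (by positivity), cbrt_of_nonneg hy, Real.mul_rpow hy (by positivity),
    ← Real.rpow_natCast w 3, ← Real.rpow_mul hw]
  norm_num

lemma cbrt_mul_pow_three (y w : ℝ) : cbrt (y * w ^ 3) = cbrt y * w := by
  have of_nonneg : ∀ {y}, 0 ≤ y → ∀ w, cbrt (y * w ^ 3) = cbrt y * w := by
    intro y hy w
    rcases le_total 0 w with hw | hw
    · exact cbrt_mul_pow_three_of_nonneg hy hw
    · rw [show y * w ^ 3 = -(y * (-w) ^ 3) by ring, cbrt_neg,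
        cbrt_mul_pow_three_of_nonneg hy (neg_nonneg.2 hw)]
      ring
  rcases le_total 0 y with hy | hy
  · exact of_nonneg hy w
  · rw [show y * w ^ 3 = -(-y * w ^ 3) by ring, cbrt_neg, of_nonneg (neg_nonneg.2 hy), cbrt_neg]
    ring

lemma phi_eq_of_g_eq_two_mul_pow_three {x r t a w : ℝ} (hg : g x r t a = 2 * w ^ 3) :
    phi x r t a = -(2/3) * (x - (r-1)*t)
      - ((x^2 + (3*a - (2*r+1)*t)*x + (r-1)^2*t^2) / w + w) / 3 := by
  have hc : cbrt 2 ≠ 0 := (cbrt_pos two_pos).ne'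
  rw [phi, hg, cbrt_mul_pow_three]
  rcases eq_or_ne w 0 with rfl | hw
  · simp
  · field_simp
    ring

lemma S_zero (x r t : ℝ) : S x r t 0 = t^2 * (x^2 - 2*(1+r)*t*x + (1-r)^2*t^2) := by
  rw [S]; ring

lemma S_zero_eq_mul {x r t : ℝ} (hr : 0 ≤ r) :
    S x r t 0 = t^2 * ((x - (1 - √r)^2*t) * (x - (1 + √r)^2*t)) := by
  rw [S_zero]
  linear_combination t^2 * (2*t*x + (2 - r - √r^2)*t^2) * Real.sq_sqrt hr

lemma S_zero_neg {x r t : ℝ} (hr : 0 ≤ r) (ht : t ≠ 0)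
    (hx1 : (1 - √r)^2 * t < x) (hx2 : x < (1 + √r)^2 * t) : S x r t 0 < 0 := by
  rw [S_zero_eq_mul hr]
  exact mul_neg_of_pos_of_neg (by positivity) (mul_neg_of_pos_of_neg (by linarith) (by linarith))

/-- At `a = 0` the number `g/2` is a perfect cube; this is its cube root. -/
noncomputable def cbrtHalfGZero (x r t : ℝ) : ℝ := (x - (r-1)*t + √(-3 * S x r t 0) / t) / 2

section ZeroParameter

variable {x r t : ℝ}

lemma sqrt_neg_three_mul_S_zero_div_sq (ht : t ≠ 0) (hS : S x r t 0 ≤ 0) :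
    (√(-3 * S x r t 0) / t) ^ 2 = -3 * (x^2 - 2*(1+r)*t*x + (1-r)^2*t^2) := by
  rw [div_pow, Real.sq_sqrt (by linarith), S_zero]
  field_simp

lemma g_zero_eq (ht : t ≠ 0) (hS : S x r t 0 ≤ 0) : g x r t 0 = 2 * cbrtHalfGZero x r t ^ 3 := by
  have hu := sqrt_neg_three_mul_S_zero_div_sq ht hS
  set u := √(-3 * S x r t 0) / t
  have hs : √(-3 * S x r t 0) = t * u := (mul_div_cancel₀ _ ht).symm
  rw [g, hs, cbrtHalfGZero]
  linear_combination (-(3 * (x - (r-1)*t) + u) / 4) * hu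

lemma quadratic_zero_eq (ht : t ≠ 0) (hS : S x r t 0 ≤ 0) :
    x^2 + (3*0 - (2*r+1)*t)*x + (r-1)^2*t^2
      = (x - (r-1)*t - cbrtHalfGZero x r t) * cbrtHalfGZero x r t := by
  rw [cbrtHalfGZero]
  linear_combination (1/4 : ℝ) * sqrt_neg_three_mul_S_zero_div_sq ht hS

lemma cbrtHalfGZero_pos (hr1 : r ≤ 1) (ht : 0 < t) (hx : 0 < x) :
    0 < cbrtHalfGZero x r t := by
  have : 0 ≤ (1 - r) * t := mul_nonneg (by linarith) ht.le
  rw [cbrtHalfGZero]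
  have : 0 ≤ √(-3 * S x r t 0) / t := by positivity
  linarith

lemma phi_zero (hr : 0 ≤ r) (hr1 : r ≤ 1) (ht : 0 < t)
    (hx1 : (1 - √r)^2 * t < x) (hx2 : x < (1 + √r)^2 * t) : phi x r t 0 = -x + (r-1)*t := by
  have hS := (S_zero_neg hr ht.ne' hx1 hx2).le
  have hw := (cbrtHalfGZero_pos hr1 ht (lt_of_le_of_lt (by positivity) hx1)).ne'
  rw [phi_eq_of_g_eq_two_mul_pow_three (g_zero_eq ht.ne' hS), quadratic_zero_eq ht.ne' hS]
  field_simp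
  ring

lemma dminus_zero (x r t : ℝ) : dminus x r t 0 = t := by simp [dminus]

lemma dplus_zero (x r t : ℝ) : dplus x r t 0 = t := by simp [dplus]

lemma dzero_zero (ht : 0 ≤ t) (hφ : phi x r t 0 = -x + (r-1)*t) : dzero x r t 0 = r * t := by
  rw [dzero, hφ, dminus_zero, dplus_zero, Real.sqrt_mul_self ht]
  ring

lemma fL_zero (hr : 0 ≤ r) (ht : 0 ≤ t) (hd : dzero x r t 0 = r * t) :
    fL x r t 0 = (1 - √r)^2 * t := by
  rw [fL, dminus_zero, dplus_zero, hd, Real.sqrt_mul hr]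
  linear_combination (1 - √r)^2 * Real.sq_sqrt ht

lemma fR_zero (hr : 0 ≤ r) (ht : 0 ≤ t) (hd : dzero x r t 0 = r * t) :
    fR x r t 0 = (1 + √r)^2 * t := by
  rw [fR, dminus_zero, dplus_zero, hd, Real.sqrt_mul hr]
  linear_combination (1 + √r)^2 * Real.sq_sqrt ht

end ZeroParameter

theorem stmt_6 (r t x : ℝ) (hr : 0 < r) (hr1 : r ≤ 1) (ht : 0 < t)
    (hx1 : (1 - Real.sqrt r)^2 * t < x) (hx2 : x < (1 + Real.sqrt r)^2 * t) :
    phi x r t 0 = -x + (r-1)*t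
      ∧ dminus x r t 0 = t ∧ dplus x r t 0 = t ∧ dzero x r t 0 = r*t
      ∧ fL x r t 0 = (1 - Real.sqrt r)^2 * t
      ∧ fR x r t 0 = (1 + Real.sqrt r)^2 * t := by
  have hφ := phi_zero hr.le hr1 ht hx1 hx2
  have hd := dzero_zero ht.le hφ
  exact ⟨hφ, dminus_zero x r t, dplus_zero x r t, hd, fL_zero hr.le ht.le hd, fR_zero hr.le ht.le hd⟩
end

section
/- Let r ∈ (0,1], t > 0, a ≥ 0 and x > 0 with S(x;r,t,a) = 0, g(x;r,t,a) ≠ 0 and D(x;r,t,a) ≥ 0. Then 2(t − a + √(D(x;r,t,a)))·x − φ(x;r,t,a)² = 0; in particular the three-parametric Marcenko–Pastur density ρ(x;r,t,a) = √(2(t − a + √(D(x;r,t,a)))x − φ(x;r,t,a)²)/(2πrtx) vanishes at x. -/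
open Filter Topology

/-!
On the zero set of `S` the square root in `g` vanishes, and the polynomial `G = gPoly` left over
satisfies `G² = 4A³` with `A = phiNum = x² + (3a − (2r+1)t)x + (r−1)²t²`. Hence `C = ∛g / ∛2`
obeys `C² = A` and `2AC = G`, and Cardano's formula collapses to `φ = −(2/3)(x − (r−1)t + C)`. A
polynomial identity between `A` and `G` then shows that `φ` is a root of `φ³ − 4(t−a)xφ + 16ax²`,
which makes `D = ((φ² − 2(t−a)x) / 2x)²` a perfect square. It remains to see `φ² ≥ 2(t−a)x`: this
is clear for `t ≤ a`, and for `t > a` we have `C² = (x − (r−1)t)² − 3(t−a)x < (x − (r−1)t)²`, so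
`φ < 0` and the cubic gives `φ² ≥ 4(t−a)x`.
-/

lemma cbrt_pow_three (y : ℝ) : cbrt y ^ 3 = y := by
  unfold cbrt
  split_ifs with hy
  · rw [← Real.rpow_natCast, ← Real.rpow_mul hy]
    norm_num
  · rw [Odd.neg_pow (by decide), ← Real.rpow_natCast, ← Real.rpow_mul (by linarith)]
    norm_num

lemma sq_eq_of_two_mul_pow_three_eq {C A G : ℝ} (hC : 2 * C ^ 3 = G) (hG : G ^ 2 = 4 * A ^ 3) :
    C ^ 2 = A := by
  have h : (C ^ 2) ^ 3 = A ^ 3 := by linear_combination (2 * C ^ 3 + G) / 4 * hC + hG / 4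
  exact (Odd.strictMono_pow (R := ℝ) ⟨1, rfl⟩).injective h

section

variable (x r t a : ℝ)

noncomputable def phiNum : ℝ := x^2 + (3*a - (2*r+1)*t)*x + (r-1)^2*t^2

noncomputable def gPoly : ℝ :=
  -2*x^3 + 3*((2*r+1)*t + 6*a)*x^2 - 3*((r-1)*((2*r+1)*t - 3*a)*t)*x + 2*(r-1)^3*t^3

variable {x r t a}

lemma g_eq_gPoly_of_S_eq_zero (hS : S x r t a = 0) : g x r t a = gPoly x r t a := by
  simp only [g, gPoly, hS, mul_zero, Real.sqrt_zero, sub_zero]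

variable (x r t a) in
lemma gPoly_sq : gPoly x r t a ^ 2 = 4 * phiNum x r t a ^ 3 - 27 * x^2 * S x r t a := by
  unfold gPoly phiNum S; ring

variable (x r t a) in
lemma sq_sub_phiNum : (x - (r-1)*t) ^ 2 - phiNum x r t a = 3 * (t - a) * x := by
  unfold phiNum; ring

lemma exists_phi_eq_of_S_eq_zero (hS : S x r t a = 0) (hg : g x r t a ≠ 0) :
    ∃ C : ℝ, C ≠ 0 ∧ C ^ 2 = phiNum x r t a ∧ 2 * phiNum x r t a * C = gPoly x r t a ∧
      phi x r t a = -(2/3) * (x - (r-1)*t + C) := by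
  have h2 : cbrt 2 ≠ 0 := fun h => by simpa [h] using cbrt_pow_three 2
  have hc : cbrt (g x r t a) ≠ 0 := fun h => hg (by rw [← cbrt_pow_three (g x r t a), h]; norm_num)
  set C := cbrt (g x r t a) / cbrt 2
  have hC3 : 2 * C ^ 3 = gPoly x r t a := by
    rw [div_pow, cbrt_pow_three, cbrt_pow_three, ← g_eq_gPoly_of_S_eq_zero hS]; ring
  have hCA : C ^ 2 = phiNum x r t a :=
    sq_eq_of_two_mul_pow_three_eq hC3 (by rw [gPoly_sq, hS]; ring)
  have hC : C ≠ 0 := div_ne_zero hc h2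
  refine ⟨C, hC, hCA, by rw [← hC3, ← hCA]; ring, ?_⟩
  have hcbrt : cbrt (g x r t a) = cbrt 2 * C := (mul_div_cancel₀ _ h2).symm
  rw [phi, ← phiNum, ← hCA, hcbrt]
  field_simp
  ring

variable (x r t a) in
lemma phiNum_gPoly_syzygy :
    2 * phiNum x r t a * ((x - (r-1)*t)^3 + 3*(x - (r-1)*t)*phiNum x r t a
        - 9*(t-a)*x*(x - (r-1)*t) - 54*a*x^2)
      + (3*(x - (r-1)*t)^2 + phiNum x r t a - 9*(t-a)*x) * gPoly x r t a = 0 := by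
  unfold phiNum gPoly; ring

lemma phi_cubic_of_S_eq_zero (hS : S x r t a = 0) (hg : g x r t a ≠ 0) :
    phi x r t a ^ 3 - 4*(t-a)*x * phi x r t a + 16*a*x^2 = 0 := by
  obtain ⟨C, hC, hCA, hCG, hphi⟩ := exists_phi_eq_of_S_eq_zero hS hg
  set u := x - (r-1)*t
  set A := phiNum x r t a
  have hA : A ≠ 0 := hCA ▸ pow_ne_zero 2 hC
  have hlin : u^3 + 3*u*A - 9*(t-a)*x*u - 54*a*x^2 + (3*u^2 + A - 9*(t-a)*x) * C = 0 := by
    refine (mul_eq_zero.mp ?_).resolve_left (mul_ne_zero two_ne_zero hA)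
    linear_combination (3*u^2 + A - 9*(t-a)*x) * hCG + phiNum_gPoly_syzygy x r t a
  rw [hphi]
  linear_combination (-8/27 : ℝ) * (hlin + (3*u + C) * hCA)

lemma phi_neg_of_lt (hr1 : r ≤ 1) (ht : 0 < t) (hx : 0 < x) (hS : S x r t a = 0)
    (hg : g x r t a ≠ 0) (hta : a < t) : phi x r t a < 0 := by
  obtain ⟨C, -, hCA, -, hphi⟩ := exists_phi_eq_of_S_eq_zero hS hg
  have hu : 0 < x - (r-1)*t := by nlinarith
  have hCu : C ^ 2 < (x - (r-1)*t) ^ 2 := by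
    rw [hCA]; nlinarith [sq_sub_phiNum x r t a, mul_pos (sub_pos.mpr hta) hx]
  have hC : -(x - (r-1)*t) < C := neg_lt_of_abs_lt (abs_lt_of_sq_lt_sq hCu hu.le)
  rw [hphi]; linarith

lemma sq_sub_two_mul_eq_of_cubic {φ : ℝ} (h : φ ^ 3 - 4*(t-a)*x*φ + 16*a*x^2 = 0) :
    (φ ^ 2 - 2*(t-a)*x) ^ 2 = (2*x) ^ 2 * (-4*a*φ + (t-a)^2) := by
  linear_combination φ * h

lemma two_mul_le_sq_of_cubic {φ : ℝ} (h : φ ^ 3 - 4*(t-a)*x*φ + 16*a*x^2 = 0) (ha : 0 ≤ a)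
    (hx : 0 < x) (hφ : a < t → φ < 0) : 2*(t-a)*x ≤ φ ^ 2 := by
  rcases le_or_gt t a with hta | hta
  · nlinarith [sq_nonneg φ]
  · nlinarith [hφ hta, mul_nonneg ha (sq_nonneg x)]

end

theorem stmt_7_general (r t a x : ℝ) (hr1 : r ≤ 1) (ht : 0 < t) (ha : 0 ≤ a)
    (hx : 0 < x) (hS : S x r t a = 0) (hg : g x r t a ≠ 0) :
    2*(t - a + Real.sqrt (Df x r t a))*x - (phi x r t a)^2 = 0 ∧ rho x r t a = 0 := by
  have hcubic := phi_cubic_of_S_eq_zero hS hg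
  have hle : 2*(t-a)*x ≤ phi x r t a ^ 2 :=
    two_mul_le_sq_of_cubic hcubic ha hx (phi_neg_of_lt hr1 ht hx hS hg)
  have hDf : Df x r t a = ((phi x r t a ^ 2 - 2*(t-a)*x) / (2*x)) ^ 2 := by
    rw [div_pow, sq_sub_two_mul_eq_of_cubic hcubic, Df]
    field_simp
  have hsqrt : Real.sqrt (Df x r t a) = (phi x r t a ^ 2 - 2*(t-a)*x) / (2*x) := by
    rw [hDf, Real.sqrt_sq (div_nonneg (sub_nonneg.mpr hle) (by positivity))]
  have hmain : 2*(t - a + Real.sqrt (Df x r t a))*x - (phi x r t a)^2 = 0 := by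
    rw [hsqrt]; field_simp; ring
  exact ⟨hmain, by rw [rho, hmain, Real.sqrt_zero, zero_div]⟩

theorem stmt_7 (r t a x : ℝ) (hr : 0 < r) (hr1 : r ≤ 1) (ht : 0 < t) (ha : 0 ≤ a)
    (hx : 0 < x) (hS : S x r t a = 0) (hg : g x r t a ≠ 0) (hD : 0 ≤ Df x r t a) :
    2*(t - a + Real.sqrt (Df x r t a))*x - (phi x r t a)^2 = 0 ∧ rho x r t a = 0 :=
  stmt_7_general r t a x hr1 ht ha hx hS hg
end

section
/- Let a > 0 and 0 < t < a. Define x₋ := (8a² + 20at − t² − √t·(8a+t)^{3/2})/(8a) and x₊ := (8a² + 20at − t² + √t·(8a+t)^{3/2})/(8a). Then 0 < x₋ < x₊, and S(x;1,t,a) = 4a·x·(x − x₋)(x − x₊) for all x ∈ ℝ; in particular the three real roots of the cubic S(·;1,t,a) are 0 < x₋ < x₊, so the left and right edges of the support in Theorem 1.1 are x_L(1,t,a) = x₋ > 0 and x_R(1,t,a) = x₊. -/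
open Filter Topology

/-! The cubic `S(·; 1, t, a)` is `x` times the quadratic `4a x² − B x + 4(a − t)³` with
`B = 8a² + 20at − t²`, whose discriminant `B² − 64a(a − t)³` equals `t(8a + t)³`; so its roots
are `(B ∓ √t (8a + t)^{3/2}) / (8a)`. The smaller one is positive because `B > 0` and
`B² − t(8a + t)³ = 64a(a − t)³ > 0` when `0 < t < a`. -/

theorem quadratic_eq_mul_sub_mul_sub {K : Type*} [Field K] [NeZero (2 : K)] {a b c s : K}
    (ha : a ≠ 0) (h : discrim a b c = s * s) (x : K) :
    a * (x * x) + b * x + c = a * (x - (-b + s) / (2 * a)) * (x - (-b - s) / (2 * a)) := by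
  rw [discrim] at h
  field_simp
  linear_combination (-1 : K) * h

lemma Real.rpow_three_halves_sq {u : ℝ} (hu : 0 ≤ u) : (u ^ ((3 : ℝ) / 2)) ^ 2 = u ^ 3 := by
  rw [← Real.rpow_mul_natCast hu]
  norm_num

lemma S_one_eq (x t a : ℝ) :
    S x 1 t a = x * (4 * a * (x * x) + -(8 * a ^ 2 + 20 * a * t - t ^ 2) * x + 4 * (a - t) ^ 3) := by
  simp only [S]
  ring

lemma discrim_S_one (t a : ℝ) :
    discrim (4 * a) (-(8 * a ^ 2 + 20 * a * t - t ^ 2)) (4 * (a - t) ^ 3) = t * (8 * a + t) ^ 3 := by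
  rw [discrim]
  ring

theorem stmt_10 (a t : ℝ) (ha : 0 < a) (ht : 0 < t) (hta : t < a)
    (xm xp : ℝ)
    (hxm : xm = (8*a^2 + 20*a*t - t^2 - Real.sqrt t * (8*a+t) ^ ((3:ℝ)/2))/(8*a))
    (hxp : xp = (8*a^2 + 20*a*t - t^2 + Real.sqrt t * (8*a+t) ^ ((3:ℝ)/2))/(8*a)) :
    0 < xm ∧ xm < xp
      ∧ (∀ x : ℝ, S x 1 t a = 4*a*x*(x - xm)*(x - xp))
      ∧ {x : ℝ | S x 1 t a = 0} = {0, xm, xp} := by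
  set B := 8 * a ^ 2 + 20 * a * t - t ^ 2
  set D := Real.sqrt t * (8 * a + t) ^ ((3 : ℝ) / 2)
  have hD_sq : D * D = t * (8 * a + t) ^ 3 := by
    rw [← sq, mul_pow, Real.sq_sqrt ht.le, Real.rpow_three_halves_sq (by positivity)]
  have hD_pos : 0 < D := by positivity
  have hB_pos : 0 < B := by nlinarith
  have hD_lt : D < B := by
    refine lt_of_pow_lt_pow_left₀ 2 hB_pos.le ?_
    have hdisc := discrim_S_one t a
    rw [discrim] at hdisc
    have : 0 < a * (a - t) ^ 3 := mul_pos ha (pow_pos (sub_pos.mpr hta) 3)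
    nlinarith
  have hfac (x : ℝ) : S x 1 t a = 4 * a * x * (x - xm) * (x - xp) := by
    rw [S_one_eq, quadratic_eq_mul_sub_mul_sub (by positivity) ((discrim_S_one t a).trans hD_sq.symm),
      hxm, hxp]
    ring
  refine ⟨hxm ▸ div_pos (by linarith) (by positivity),
    hxm ▸ hxp ▸ div_lt_div_of_pos_right (by linarith) (by positivity), hfac, ?_⟩
  ext x
  simp [hfac, ha.ne', sub_eq_zero, or_assoc]
end

section
/- Let a > 0 and, for 0 < t < a, define x_L(t) := (8a² + 20at − t² − √t·(8a+t)^{3/2})/(8a). Then lim_{t → a⁻} x_L(t)/(a − t)³ = 4/(27a²). In other words, the left edge of the support of the three-parametric Marcenko–Pastur density with r = 1 behaves as x_L(1,t,a) ≃ (4/(27a²))·(t_c(a) − t)^ν with critical exponent ν = 3 as t increases to the critical time t_c(a) = a. -/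
/-!
Multiplying numerator and denominator by the conjugate `A + B` of `A - B`, where
`A = 8a² + 20at - t²` and `B = √t (8a+t)^{3/2}`, turns the cancellation at `t = a` into an
exact factor: `A² - B² = 64a(a - t)³`. Hence `x_L(t)/(a - t)³ = 8/(A + B)`, and `A + B` is
continuous with value `27a² + 27a²` at `t = a`.
-/

open Real Filter Topology Set

lemma Real.rpow_three_halves {s : ℝ} (hs : 0 ≤ s) : s ^ ((3:ℝ)/2) = √(s ^ 3) := by
  rw [sqrt_eq_rpow, ← rpow_natCast, ← rpow_mul hs]
  norm_num

lemma Real.sqrt_mul_rpow_three_halves {t s : ℝ} (hs : 0 ≤ s) :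
    √t * s ^ ((3:ℝ)/2) = √(t * s ^ 3) := by
  rw [rpow_three_halves hs, sqrt_mul' t (by positivity)]

lemma sq_sub_mul_cube_eq (a t : ℝ) :
    (8*a^2 + 20*a*t - t^2)^2 - t * (8*a + t)^3 = 64*a * (a - t)^3 := by
  ring

lemma edge_div_cube_eq {a t : ℝ} (ht : t ∈ Ioo 0 a) :
    (8*a^2 + 20*a*t - t^2 - √(t * (8*a + t)^3)) / (8*a) / (a - t)^3
      = 8 / (8*a^2 + 20*a*t - t^2 + √(t * (8*a + t)^3)) := by
  obtain ⟨ht0, hta⟩ := ht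
  have ha : 0 < a := ht0.trans hta
  have hB : √(t * (8*a + t)^3) ^ 2 = t * (8*a + t)^3 := sq_sqrt (by positivity)
  have hA : 0 < 8*a^2 + 20*a*t - t^2 := by nlinarith
  have hsum : 0 < 8*a^2 + 20*a*t - t^2 + √(t * (8*a + t)^3) := by positivity
  have hat : 0 < a - t := by linarith
  rw [div_div, div_eq_div_iff (by positivity) hsum.ne']
  linear_combination -hB + sq_sub_mul_cube_eq a t

lemma tendsto_eight_div_conj {a : ℝ} (ha : 0 < a) :
    Tendsto (fun t => 8 / (8*a^2 + 20*a*t - t^2 + √(t * (8*a + t)^3))) (𝓝 a)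
      (𝓝 (4 / (27*a^2))) := by
  have hval : √(a * (8*a + a)^3) = 27*a^2 := by
    rw [show a * (8*a + a)^3 = (27*a^2)^2 by ring, sqrt_sq (by positivity)]
  have hlim : 4 / (27*a^2) = 8 / (8*a^2 + 20*a*a - a^2 + √(a * (8*a + a)^3)) := by
    rw [hval]
    field_simp
    ring
  rw [hlim]
  refine tendsto_const_nhds.div (Continuous.tendsto (by fun_prop) a) ?_
  rw [hval]
  ring_nf
  positivity

theorem stmt_13 (a : ℝ) (ha : 0 < a)
    (xL : ℝ → ℝ)
    (hxL : ∀ t, xL t = (8*a^2 + 20*a*t - t^2 - Real.sqrt t * (8*a+t) ^ ((3:ℝ)/2))/(8*a)) :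
    Filter.Tendsto (fun t : ℝ => xL t / (a - t)^3)
      (nhdsWithin a (Set.Ioo 0 a)) (nhds (4/(27*a^2))) := by
  refine (tendsto_eight_div_conj ha).mono_left nhdsWithin_le_nhds |>.congr' ?_
  filter_upwards [self_mem_nhdsWithin] with t ht
  have h8 : 0 ≤ 8*a + t := by linarith [ht.1]
  rw [hxL, sqrt_mul_rpow_three_halves h8, edge_div_cube_eq ht]
end
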